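/- Let η¹, η², η³ be differential functions of r satisfying identically in the jet variables the determining equations for generalized symmetries of the diagonalized drift flux system (S): 𝒟_t η¹ + V¹ 𝒟_x η¹ + r¹_1(η¹+η²) = 0, 𝒟_t η² + V² 𝒟_x η² + r²_1(η¹+η²) = 0, 𝒟_t η³ + V³ 𝒟_x η³ + r³_1(η¹+η²) = 0. Then η¹ and η² do not depend on any of the jet variables r³_κ, κ ∈ ℕ₀, i.e., ∂η¹/∂r³_κ = ∂η²/∂r³_κ = 0 identically for all κ. -/

import Mathlib

/- STATEMENT 9 (Lemma 2 of the paper): for a generalized symmetry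
(η¹,η²,η³) of the diagonalized drift flux system (S), the components η¹ and η²
do not depend on the jet variables r³_κ. -/

noncomputable section

namespace IDFM

/-- The infinite jet space with coordinates t, x and r^i_κ (i ranging over
`Fin 3`, κ ∈ ℕ): `p.2.2 i κ` represents ∂^κ r^{i+1}/∂x^κ. -/
abbrev Jet : Type := ℝ × ℝ × (Fin 3 → ℕ → ℝ)

/-- Directional (Gateaux) derivative of a function on jet space. -/
def gd (f : Jet → ℝ) (p v : Jet) : ℝ := deriv (fun s : ℝ => f (p + s • v)) 0

/-- The restricted total derivative operator
𝒟_x = ∂_x + Σ_{κ,i} r^i_{κ+1} ∂_{r^i_κ}. -/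
def Dx (f : Jet → ℝ) (p : Jet) : ℝ :=
  gd f p (0, 1, fun i κ => p.2.2 i (κ + 1))

/-- The characteristic speeds V¹ = r¹+r²+1, V² = r¹+r²−1, V³ = r¹+r². -/
def V (i : Fin 3) (p : Jet) : ℝ :=
  p.2.2 0 0 + p.2.2 1 0 + if i = 0 then 1 else if i = 1 then -1 else 0

/-- The restricted total derivative operator
𝒟_t = ∂_t − Σ_{κ,i} 𝒟_x^κ(V^i r^i_1) ∂_{r^i_κ}. -/
def Dt (f : Jet → ℝ) (p : Jet) : ℝ :=
  gd f p (1, 0, fun i κ => -(Dx^[κ] (fun q => V i q * q.2.2 i 1) p))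

/-- `f` is a smooth differential function of `r` of order at most `n`. -/
def IsDiffFun (n : ℕ) (f : Jet → ℝ) : Prop :=
  ∃ F : ℝ × ℝ × (Fin 3 → Fin (n + 1) → ℝ) → ℝ,
    ContDiff ℝ (⊤ : ℕ∞) F ∧ ∀ p : Jet, f p = F (p.1, p.2.1, fun i κ => p.2.2 i κ.1)


-- jet-level defs
def e3 (μ : ℕ) : Jet := (0, 0, Pi.single 2 (Pi.single μ (1 : ℝ)))

def cx (p : Jet) : Jet := (0, 1, fun i κ => p.2.2 i (κ + 1))

def hh (i : Fin 3) (κ : ℕ) (p : Jet) : ℝ := Dx^[κ] (fun q => V i q * q.2.2 i 1) p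

def ct (p : Jet) : Jet := (1, 0, fun i κ => -(hh i κ p))

lemma Dx_eq_gd (f : Jet → ℝ) (p : Jet) : Dx f p = gd f p (cx p) := rfl
lemma Dt_eq_gd (f : Jet → ℝ) (p : Jet) : Dt f p = gd f p (ct p) := rfl

@[simp] lemma add_smul_r (p v : Jet) (s : ℝ) (i : Fin 3) (κ : ℕ) :
    (p + s • v).2.2 i κ = p.2.2 i κ + s * v.2.2 i κ := rfl
@[simp] lemma add_smul_t (p v : Jet) (s : ℝ) : (p + s • v).1 = p.1 + s * v.1 := rfl
@[simp] lemma add_smul_x (p v : Jet) (s : ℝ) : (p + s • v).2.1 = p.2.1 + s * v.2.1 := rfl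
@[simp] lemma cx_r (p : Jet) (i : Fin 3) (κ : ℕ) : (cx p).2.2 i κ = p.2.2 i (κ + 1) := rfl
@[simp] lemma e3_r (μ : ℕ) (i : Fin 3) (κ : ℕ) :
    (e3 μ).2.2 i κ = if i = 2 then (if κ = μ then 1 else 0) else 0 := by
  rcases eq_or_ne i 2 with h | h
  · subst h
    simp [e3, Pi.single_apply]
  · simp [e3, h, Pi.single_eq_of_ne h]

-- Z invariance
def Z (p : Jet) : Jet := (p.1, p.2.1, fun i κ => if i = 2 then 0 else p.2.2 i κ)

lemma Z_line (p v : Jet) (s : ℝ) : Z (p + s • v) = Z p + s • Z v := by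
  refine Prod.ext rfl (Prod.ext rfl ?_)
  funext i κ
  show (if i = 2 then (0:ℝ) else p.2.2 i κ + s * v.2.2 i κ) = _
  rcases eq_or_ne i 2 with h | h
  · simp [Z, h]
  · simp [Z, h]

lemma Z_cx (q : Jet) : Z (cx q) = cx (Z q) := rfl

lemma Z_e3 (μ : ℕ) : Z (e3 μ) = 0 := by
  refine Prod.ext rfl (Prod.ext rfl ?_)
  funext i κ
  show (if i = 2 then (0:ℝ) else (e3 μ).2.2 i κ) = 0
  rcases eq_or_ne i 2 with h | h <;> simp [h]

lemma pred_Dx {f : Jet → ℝ} (hf : ∀ q, f q = f (Z q)) : ∀ q, Dx f q = Dx f (Z q) := by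
  intro q
  have h1 : (fun s : ℝ => f (q + s • cx q)) = fun s : ℝ => f (Z q + s • cx (Z q)) := by
    funext s
    rw [hf, Z_line, Z_cx]
  rw [Dx_eq_gd, Dx_eq_gd, gd, gd, h1]

lemma pred_hh {i : Fin 3} (hi : i ≠ 2) (κ : ℕ) : ∀ q, hh i κ q = hh i κ (Z q) := by
  induction κ with
  | zero =>
    intro q
    show V i q * q.2.2 i 1 = V i (Z q) * (Z q).2.2 i 1
    have h1 : V i (Z q) = V i q := by
      show (Z q).2.2 0 0 + (Z q).2.2 1 0 + _ = _
      simp [Z, V]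
    have h2 : (Z q).2.2 i 1 = q.2.2 i 1 := by simp [Z, hi]
    rw [h1, h2]
  | succ κ ih =>
    intro q
    have h1 : ∀ r, hh i (κ + 1) r = Dx (hh i κ) r := by
      intro r
      show Dx^[κ + 1] _ r = _
      rw [Function.iterate_succ_apply']
      rfl
    rw [h1 q, h1 (Z q)]
    exact pred_Dx (fun r => ih r) q

lemma hh_const {i : Fin 3} (hi : i ≠ 2) (κ μ : ℕ) (p : Jet) (s : ℝ) :
    hh i κ (p + s • e3 μ) = hh i κ p := by
  rw [pred_hh hi κ, Z_line, Z_e3, smul_zero, add_zero, ← pred_hh hi κ]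

-- closed form for hh 2
def W (j : ℕ) (p : Jet) : ℝ := p.2.2 0 j + p.2.2 1 j

def hcf (κ : ℕ) (p : Jet) : ℝ :=
  ∑ j ∈ Finset.range (κ + 1), (κ.choose j : ℝ) * W j p * p.2.2 2 (κ + 1 - j)

def dcf (κ μ : ℕ) (p : Jet) : ℝ :=
  ∑ j ∈ Finset.range (κ + 1), (κ.choose j : ℝ) * W j p * (if κ + 1 - j = μ then 1 else 0)

lemma sum_shuffle (κ : ℕ) (p : Jet) :
    (∑ j ∈ Finset.range (κ + 1), (κ.choose j : ℝ) *
      (W (j + 1) p * p.2.2 2 (κ + 1 - j) + W j p * p.2.2 2 (κ + 1 - j + 1)))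
      = hcf (κ + 1) p := by
  have hsplit : ∀ j ∈ Finset.range (κ + 1), (κ.choose j : ℝ) *
      (W (j + 1) p * p.2.2 2 (κ + 1 - j) + W j p * p.2.2 2 (κ + 1 - j + 1))
      = (κ.choose j : ℝ) * W (j + 1) p * p.2.2 2 (κ + 1 - j)
        + (κ.choose j : ℝ) * W j p * p.2.2 2 (κ + 2 - j) := by
    intro j hj
    rw [Finset.mem_range] at hj
    have : κ + 1 - j + 1 = κ + 2 - j := by omega
    rw [this]; ring
  rw [Finset.sum_congr rfl hsplit, Finset.sum_add_distrib]
  -- S1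
  have hS1 : (∑ j ∈ Finset.range (κ + 1), (κ.choose j : ℝ) * W (j + 1) p * p.2.2 2 (κ + 1 - j))
      = ∑ j ∈ Finset.range (κ + 2),
          (if j = 0 then (0:ℝ) else (κ.choose (j - 1) : ℝ)) * W j p * p.2.2 2 (κ + 2 - j) := by
    rw [Finset.sum_range_succ' (fun j => (if j = 0 then (0:ℝ) else (κ.choose (j - 1) : ℝ))
        * W j p * p.2.2 2 (κ + 2 - j)) (κ + 1)]
    simp only [Nat.add_sub_cancel, if_neg (Nat.succ_ne_zero _), if_pos rfl]
    simp
  -- S2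
  have hS2 : (∑ j ∈ Finset.range (κ + 1), (κ.choose j : ℝ) * W j p * p.2.2 2 (κ + 2 - j))
      = ∑ j ∈ Finset.range (κ + 2), (κ.choose j : ℝ) * W j p * p.2.2 2 (κ + 2 - j) := by
    have h := Finset.sum_range_succ
      (fun j => (κ.choose j : ℝ) * W j p * p.2.2 2 (κ + 2 - j)) (κ + 1)
    rw [h, Nat.choose_succ_self]
    simp
  rw [hS1, hS2, ← Finset.sum_add_distrib]
  unfold hcf
  refine Finset.sum_congr rfl fun j hj => ?_
  rcases Nat.eq_zero_or_pos j with h0 | h0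
  · subst h0; simp
  · obtain ⟨j', rfl⟩ : ∃ j', j = j' + 1 := ⟨j - 1, by omega⟩
    rw [if_neg (by omega)]
    have : (κ + 1).choose (j' + 1) = κ.choose j' + κ.choose (j' + 1) := Nat.choose_succ_succ κ j'
    rw [this]
    push_cast
    ring

lemma Dx_hcf (κ : ℕ) (p : Jet) : Dx (hcf κ) p = hcf (κ + 1) p := by
  have hfun : (fun s : ℝ => hcf κ (p + s • cx p)) =
      fun s : ℝ => ∑ j ∈ Finset.range (κ + 1), (κ.choose j : ℝ) *
        (W j p + s * W (j + 1) p) * (p.2.2 2 (κ + 1 - j) + s * p.2.2 2 (κ + 1 - j + 1)) := by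
    funext s
    unfold hcf
    refine Finset.sum_congr rfl fun j hj => ?_
    simp only [W, add_smul_r, cx_r]
    ring
  have hder : HasDerivAt (fun s : ℝ => ∑ j ∈ Finset.range (κ + 1), (κ.choose j : ℝ) *
        (W j p + s * W (j + 1) p) * (p.2.2 2 (κ + 1 - j) + s * p.2.2 2 (κ + 1 - j + 1)))
      (∑ j ∈ Finset.range (κ + 1), (κ.choose j : ℝ) *
        (W (j + 1) p * p.2.2 2 (κ + 1 - j) + W j p * p.2.2 2 (κ + 1 - j + 1))) 0 := by
    apply HasDerivAt.fun_sum
    intro j hj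
    have h1 : HasDerivAt (fun s : ℝ => W j p + s * W (j + 1) p) (W (j + 1) p) 0 := by
      simpa using ((hasDerivAt_id (0:ℝ)).mul_const (W (j + 1) p)).const_add (W j p)
    have h2 : HasDerivAt (fun s : ℝ => p.2.2 2 (κ + 1 - j) + s * p.2.2 2 (κ + 1 - j + 1))
        (p.2.2 2 (κ + 1 - j + 1)) 0 := by
      simpa using ((hasDerivAt_id (0:ℝ)).mul_const (p.2.2 2 (κ + 1 - j + 1))).const_add
        (p.2.2 2 (κ + 1 - j))
    have h3 := (h1.const_mul ((κ.choose j : ℝ))).mul h2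
    exact h3.congr_deriv (by ring)
  rw [Dx_eq_gd, gd, hfun, hder.deriv, sum_shuffle]

lemma hh2_eq (κ : ℕ) : hh 2 κ = hcf κ := by
  induction κ with
  | zero =>
    funext p
    show V 2 p * p.2.2 2 1 = _
    unfold hcf
    rw [Finset.sum_range_one]
    simp [V, W, (by decide : ¬((2:Fin 3) = 0)), (by decide : ¬((2:Fin 3) = 1))]
  | succ κ ih =>
    funext p
    have h1 : hh 2 (κ + 1) p = Dx (hh 2 κ) p := by
      show Dx^[κ + 1] _ p = _
      rw [Function.iterate_succ_apply']
      rfl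
    rw [h1, ih, Dx_hcf]

lemma hcf_line (κ μ : ℕ) (p : Jet) (s : ℝ) :
    hcf κ (p + s • e3 μ) = hcf κ p + s * dcf κ μ p := by
  unfold hcf dcf
  rw [Finset.mul_sum, ← Finset.sum_add_distrib]
  refine Finset.sum_congr rfl fun j hj => ?_
  simp only [W, add_smul_r, e3_r, if_pos rfl,
    if_neg (by decide : ¬((0:Fin 3) = 2)), if_neg (by decide : ¬((1:Fin 3) = 2))]
  split_ifs <;> ring

lemma dcf_eval (κ m : ℕ) (p : Jet) :
    dcf κ (m + 1) p = if m ≤ κ then (κ.choose (κ - m) : ℝ) * W (κ - m) p else 0 := by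
  unfold dcf
  by_cases h : m ≤ κ
  · rw [if_pos h, Finset.sum_eq_single (κ - m)]
    · rw [if_pos (by omega)]; ring
    · intro j hj hne
      rw [Finset.mem_range] at hj
      rw [if_neg (by omega)]; ring
    · intro habs
      exact absurd (Finset.mem_range.mpr (by omega)) habs
  · rw [if_neg h]
    apply Finset.sum_eq_zero
    intro j hj
    rw [Finset.mem_range] at hj
    rw [if_neg (by omega)]; ring


-- infrastructure

abbrev E (n : ℕ) : Type := ℝ × ℝ × (Fin 3 → Fin (n + 1) → ℝ)

variable {n : ℕ}

def proj (n : ℕ) (p : Jet) : E n := (p.1, p.2.1, fun i κ => p.2.2 i κ.1)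

lemma proj_add_smul (p v : Jet) (s : ℝ) : proj n (p + s • v) = proj n p + s • proj n v := rfl

lemma proj_surj : Function.Surjective (proj n) := by
  intro y
  refine ⟨(y.1, y.2.1, fun i κ => if h : κ < n + 1 then y.2.2 i ⟨κ, h⟩ else 0), ?_⟩
  refine Prod.ext rfl (Prod.ext rfl ?_)
  funext i κ
  simp [proj]
  intro h
  exact absurd h (by have := κ.2; omega)

variable {F : E n → ℝ}

lemma line_hasDerivAt (x a : E n) : HasDerivAt (fun s : ℝ => x + s • a) a 0 := by
  simpa using ((hasDerivAt_id (0 : ℝ)).smul_const a).const_add x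

lemma comp_line_hasDerivAt (hF : ContDiff ℝ (⊤ : ℕ∞) F) (x a : E n) :
    HasDerivAt (fun s : ℝ => F (x + s • a)) (fderiv ℝ F x a) 0 := by
  have h3 := ((hF.differentiable (by simp)) (x + (0 : ℝ) • a)).hasFDerivAt.comp_hasDerivAt 0
    (line_hasDerivAt x a)
  simp only [zero_smul, add_zero] at h3
  exact h3

lemma fderiv_hasFDerivAt (hF : ContDiff ℝ (⊤ : ℕ∞) F) (x : E n) :
    HasFDerivAt (fderiv ℝ F) (fderiv ℝ (fderiv ℝ F) x) x :=
  (((hF.fderiv_right (m := (⊤ : ℕ∞)) (by simp)).differentiable (by simp)) x).hasFDerivAt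

lemma gd_eq (hF : ContDiff ℝ (⊤ : ℕ∞) F) {f : Jet → ℝ} (hf : ∀ p, f p = F (proj n p)) (p v : Jet) :
    gd f p v = fderiv ℝ F (proj n p) (proj n v) := by
  have h : (fun s : ℝ => f (p + s • v)) = fun s => F (proj n p + s • proj n v) := by
    funext s; rw [hf, proj_add_smul]
  rw [gd, h, (comp_line_hasDerivAt hF _ _).deriv]

lemma bilin_hasDerivAt (hF : ContDiff ℝ (⊤ : ℕ∞) F) (x a b c : E n) :
    HasDerivAt (fun s : ℝ => fderiv ℝ F (x + s • a) (b + s • c))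
      (fderiv ℝ (fderiv ℝ F) x a b + fderiv ℝ F x c) 0 := by
  have hc : HasDerivAt (fun s : ℝ => fderiv ℝ F (x + s • a)) (fderiv ℝ (fderiv ℝ F) x a) 0 := by
    have h := (fderiv_hasFDerivAt hF (x + (0 : ℝ) • a)).comp_hasDerivAt 0 (line_hasDerivAt x a)
    simp only [zero_smul, add_zero] at h
    exact h
  simpa using hc.clm_apply (line_hasDerivAt b c)

lemma snd_symm (hF : ContDiff ℝ (⊤ : ℕ∞) F) (x a b : E n) :
    fderiv ℝ (fderiv ℝ F) x a b = fderiv ℝ (fderiv ℝ F) x b a :=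
  second_derivative_symmetric (fun y => ((hF.differentiable (by simp)) y).hasFDerivAt)
    (fderiv_hasFDerivAt hF x) a b

lemma snd_vanish (hF : ContDiff ℝ (⊤ : ℕ∞) F) (a' : E n) (h : ∀ y, fderiv ℝ F y a' = 0)
    (x b : E n) : fderiv ℝ (fderiv ℝ F) x b a' = 0 := by
  have h1 : HasFDerivAt (fun y => fderiv ℝ F y a')
      ((ContinuousLinearMap.apply ℝ ℝ a').comp (fderiv ℝ (fderiv ℝ F) x)) x :=
    (ContinuousLinearMap.apply ℝ ℝ a').hasFDerivAt.comp x (fderiv_hasFDerivAt hF x)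
  have hfun : (fun y : E n => fderiv ℝ F y a') = fun _ => (0 : ℝ) := funext h
  rw [hfun] at h1
  have h3 := h1.unique (hasFDerivAt_const 0 x)
  have h4 := congrArg (fun L : E n →L[ℝ] ℝ => L b) h3
  simpa using h4

-- line lemmas for the direction vectors
def ωvec (m : ℕ) (p : Jet) : Jet :=
  (0, 0, fun i κ => if i = 2 then -(dcf κ (m + 1) p) else 0)

lemma cx_line (m : ℕ) (p : Jet) (s : ℝ) :
    cx (p + s • e3 (m + 1)) = cx p + s • e3 m := by
  refine Prod.ext ?_ (Prod.ext ?_ ?_)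
  · show (0 : ℝ) = 0 + s * 0; ring
  · show (1 : ℝ) = 1 + s * 0; ring
  · funext i κ
    show (p + s • e3 (m + 1)).2.2 i (κ + 1) = p.2.2 i (κ + 1) + s * (e3 m).2.2 i κ
    rw [add_smul_r, e3_r, e3_r]
    rcases eq_or_ne i 2 with h | h
    · simp only [if_pos h, show (κ + 1 = m + 1) ↔ (κ = m) from by omega]
    · simp [h]

lemma ct_line (m : ℕ) (p : Jet) (s : ℝ) :
    ct (p + s • e3 (m + 1)) = ct p + s • ωvec m p := by
  refine Prod.ext ?_ (Prod.ext ?_ ?_)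
  · show (1 : ℝ) = 1 + s * 0; ring
  · show (0 : ℝ) = 0 + s * 0; ring
  · funext i κ
    show -(hh i κ (p + s • e3 (m + 1)))
        = -(hh i κ p) + s * (if i = 2 then -(dcf κ (m + 1) p) else 0)
    rcases eq_or_ne i 2 with h | h
    · subst h
      rw [if_pos rfl, show hh 2 κ = hcf κ from hh2_eq κ, hcf_line]
      ring
    · rw [hh_const h, if_neg h]
      ring

lemma V_line (i : Fin 3) (μ : ℕ) (p : Jet) (s : ℝ) :
    V i (p + s • e3 μ) = V i p := by
  rw [V, V, add_smul_r, add_smul_r, e3_r, e3_r,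
    if_neg (by decide : ¬((0 : Fin 3) = 2)), if_neg (by decide : ¬((1 : Fin 3) = 2))]
  ring

variable {n : ℕ}

lemma proj_e3_big {κ : ℕ} (hκ : n + 1 ≤ κ) : proj n (e3 κ) = 0 := by
  refine Prod.ext rfl (Prod.ext rfl ?_)
  funext i κf
  show (e3 κ).2.2 i κf.1 = 0
  rw [e3_r]
  rcases eq_or_ne i 2 with h | h
  · rw [if_pos h, if_neg (by omega : ¬(κf.1 = κ))]
  · rw [if_neg h]

lemma omega_decomp (n m : ℕ) (p : Jet) :
    proj n (ωvec m p)
      = ∑ κ ∈ Finset.range (n + 1), (-(dcf κ (m + 1) p)) • proj n (e3 κ) := by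
  refine Prod.ext ?_ (Prod.ext ?_ ?_)
  · rw [Prod.fst_sum]
    simp [proj, ωvec, e3]
  · rw [Prod.snd_sum, Prod.fst_sum]
    simp [proj, ωvec, e3]
  · rw [Prod.snd_sum, Prod.snd_sum]
    funext i κf
    rw [Finset.sum_apply, Finset.sum_apply]
    show (if i = 2 then -(dcf κf.1 (m + 1) p) else 0)
        = ∑ κ ∈ Finset.range (n + 1), (-(dcf κ (m + 1) p)) * (e3 κ).2.2 i κf.1
    simp only [e3_r]
    rcases eq_or_ne i 2 with h | h
    · rw [if_pos h]
      have : ∀ κ ∈ Finset.range (n + 1), (-(dcf κ (m + 1) p)) *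
          (if i = 2 then (if κf.1 = κ then (1:ℝ) else 0) else 0)
          = if κf.1 = κ then -(dcf κ (m + 1) p) else 0 := by
        intro κ _
        rw [if_pos h]
        split_ifs <;> ring
      rw [Finset.sum_congr rfl this, Finset.sum_ite_eq, if_pos (Finset.mem_range.mpr κf.2)]
    · rw [if_neg h]
      refine (Finset.sum_eq_zero fun κ _ => ?_).symm
      rw [if_neg h, mul_zero]

lemma main_step {F : E n → ℝ} (hF : ContDiff ℝ (⊤ : ℕ∞) F)
    {η0 η1 ηi : Jet → ℝ} (hfi : ∀ p, ηi p = F (proj n p))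
    {i : Fin 3} (hi : i = 0 ∨ i = 1)
    (hdet : ∀ p, Dt ηi p + V i p * Dx ηi p + p.2.2 i 1 * (η0 p + η1 p) = 0)
    {m : ℕ} (hm : m ≤ n)
    (hIHi : ∀ κ, m + 1 ≤ κ → ∀ p, gd ηi p (e3 κ) = 0)
    (p : Jet)
    (hd01 : HasDerivAt
      (fun s : ℝ => η0 (p + s • e3 (m + 1)) + η1 (p + s • e3 (m + 1))) 0 0) :
    gd ηi p (e3 m) = 0 := by
  have hzero : ∀ y, fderiv ℝ F y (proj n (e3 (m + 1))) = 0 := by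
    intro y
    obtain ⟨q, rfl⟩ := proj_surj y
    rw [← gd_eq hF hfi]
    exact hIHi (m + 1) le_rfl q
  -- Term 1 : the Dt term
  have hT1 : HasDerivAt (fun s : ℝ => Dt ηi (p + s • e3 (m + 1)))
      (-(W 0 p) * gd ηi p (e3 m)) 0 := by
    have hT1fun : (fun s : ℝ => Dt ηi (p + s • e3 (m + 1))) =
        fun s : ℝ => fderiv ℝ F (proj n p + s • proj n (e3 (m + 1)))
          (proj n (ct p) + s • proj n (ωvec m p)) := by
      funext s
      rw [Dt_eq_gd, gd_eq hF hfi, proj_add_smul, ct_line, proj_add_smul]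
    rw [hT1fun]
    have h1 := bilin_hasDerivAt hF (proj n p) (proj n (e3 (m + 1)))
      (proj n (ct p)) (proj n (ωvec m p))
    have h2 : fderiv ℝ (fderiv ℝ F) (proj n p) (proj n (e3 (m + 1))) (proj n (ct p)) = 0 := by
      rw [snd_symm hF]
      exact snd_vanish hF _ hzero _ _
    rw [h2, zero_add] at h1
    convert h1 using 1
    rw [omega_decomp n m p, map_sum]
    simp only [map_smul, smul_eq_mul]
    symm
    rw [Finset.sum_eq_single m]
    · rw [dcf_eval, if_pos le_rfl, Nat.sub_self, Nat.choose_zero_right, ← gd_eq hF hfi]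
      push_cast
      ring
    · intro κ hκ hne
      rcases lt_or_gt_of_ne hne with hlt | hgt
      · rw [dcf_eval, if_neg (by omega)]
        ring
      · rw [← gd_eq hF hfi, hIHi κ (by omega) p, mul_zero]
    · intro habs
      exact absurd (Finset.mem_range.mpr (by omega)) habs
  -- Term 2 : the V Dx term
  have hT2 : HasDerivAt
      (fun s : ℝ => V i (p + s • e3 (m + 1)) * Dx ηi (p + s • e3 (m + 1)))
      (V i p * gd ηi p (e3 m)) 0 := by
    have hT2fun : (fun s : ℝ => V i (p + s • e3 (m + 1)) * Dx ηi (p + s • e3 (m + 1))) =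
        fun s : ℝ => V i p * fderiv ℝ F (proj n p + s • proj n (e3 (m + 1)))
          (proj n (cx p) + s • proj n (e3 m)) := by
      funext s
      rw [V_line, Dx_eq_gd, gd_eq hF hfi, proj_add_smul, cx_line, proj_add_smul]
    rw [hT2fun]
    have h1 := bilin_hasDerivAt hF (proj n p) (proj n (e3 (m + 1)))
      (proj n (cx p)) (proj n (e3 m))
    have h2 : fderiv ℝ (fderiv ℝ F) (proj n p) (proj n (e3 (m + 1))) (proj n (cx p)) = 0 := by
      rw [snd_symm hF]
      exact snd_vanish hF _ hzero _ _
    rw [h2, zero_add] at h1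
    have h3 := h1.const_mul (V i p)
    rw [gd_eq hF hfi]
    exact h3
  -- Term 3
  have hT3 : HasDerivAt (fun s : ℝ => (p + s • e3 (m + 1)).2.2 i 1 *
      (η0 (p + s • e3 (m + 1)) + η1 (p + s • e3 (m + 1)))) 0 0 := by
    have hi2 : i ≠ 2 := by rcases hi with h | h <;> subst h <;> decide
    have hconst : (fun s : ℝ => (p + s • e3 (m + 1)).2.2 i 1 *
        (η0 (p + s • e3 (m + 1)) + η1 (p + s • e3 (m + 1)))) =
        fun s : ℝ => p.2.2 i 1 *
          (η0 (p + s • e3 (m + 1)) + η1 (p + s • e3 (m + 1))) := by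
      funext s
      rw [add_smul_r, e3_r, if_neg hi2]
      ring
    rw [hconst]
    simpa using hd01.const_mul (p.2.2 i 1)
  -- combine
  have hsum := (hT1.add hT2).add hT3
  have hfun0 : (fun s : ℝ => Dt ηi (p + s • e3 (m + 1))
      + V i (p + s • e3 (m + 1)) * Dx ηi (p + s • e3 (m + 1))
      + (p + s • e3 (m + 1)).2.2 i 1 *
        (η0 (p + s • e3 (m + 1)) + η1 (p + s • e3 (m + 1)))) = fun _ => (0 : ℝ) :=
    funext fun s => hdet _
  simp only [Pi.add_def] at hsum
  rw [hfun0] at hsum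
  have h0 := hsum.unique (hasDerivAt_const 0 0)
  have hkey : (V i p - W 0 p) * gd ηi p (e3 m) = 0 := by linarith
  have hV : V i p - W 0 p = 1 ∨ V i p - W 0 p = -1 := by
    rcases hi with h | h <;> subst h
    · left
      rw [V, W, if_pos rfl]
      ring
    · right
      rw [V, W, if_neg (by decide : ¬((1 : Fin 3) = 0)), if_pos rfl]
      ring
  rcases hV with h | h <;> rw [h] at hkey <;> linarith

theorem symmetry_components_independent_of_r3
    (n : ℕ) (η : Fin 3 → Jet → ℝ) (hη : ∀ i, IsDiffFun n (η i))
    (hdet : ∀ (i : Fin 3) (p : Jet),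
      Dt (η i) p + V i p * Dx (η i) p + p.2.2 i 1 * (η 0 p + η 1 p) = 0) :
    ∀ (κ : ℕ) (p : Jet),
      gd (η 0) p (0, 0, Pi.single (2 : Fin 3) (Pi.single κ (1 : ℝ))) = 0 ∧
      gd (η 1) p (0, 0, Pi.single (2 : Fin 3) (Pi.single κ (1 : ℝ))) = 0 := by
  obtain ⟨F0, hF0, hf0⟩ := hη 0
  obtain ⟨F1, hF1, hf1⟩ := hη 1
  have hf0' : ∀ p, η 0 p = F0 (proj n p) := hf0
  have hf1' : ∀ p, η 1 p = F1 (proj n p) := hf1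
  suffices H : ∀ (d κ : ℕ), n + 1 - d ≤ κ → ∀ p : Jet,
      gd (η 0) p (e3 κ) = 0 ∧ gd (η 1) p (e3 κ) = 0 by
    intro κ p
    exact H (n + 1) κ (by omega) p
  intro d
  induction d with
  | zero =>
    intro κ hκ p
    constructor
    · rw [gd_eq hF0 hf0', proj_e3_big (by omega)]
      simp
    · rw [gd_eq hF1 hf1', proj_e3_big (by omega)]
      simp
  | succ d ih =>
    intro κ hκ p
    by_cases hbig : n + 1 - d ≤ κ
    · exact ih κ hbig p
    · have hm : κ ≤ n := by omega
      have hIH0 : ∀ κ', κ + 1 ≤ κ' → ∀ q, gd (η 0) q (e3 κ') = 0 :=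
        fun κ' h q => (ih κ' (by omega) q).1
      have hIH1 : ∀ κ', κ + 1 ≤ κ' → ∀ q, gd (η 1) q (e3 κ') = 0 :=
        fun κ' h q => (ih κ' (by omega) q).2
      have hd01 : HasDerivAt
          (fun s : ℝ => η 0 (p + s • e3 (κ + 1)) + η 1 (p + s • e3 (κ + 1))) 0 0 := by
        have h0 : (fun s : ℝ => η 0 (p + s • e3 (κ + 1)) + η 1 (p + s • e3 (κ + 1)))
            = fun s : ℝ => F0 (proj n p + s • proj n (e3 (κ + 1)))
                + F1 (proj n p + s • proj n (e3 (κ + 1))) := by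
          funext s
          rw [hf0', hf1', proj_add_smul]
        rw [h0]
        have h1 := (comp_line_hasDerivAt hF0 (proj n p) (proj n (e3 (κ + 1)))).add
          (comp_line_hasDerivAt hF1 (proj n p) (proj n (e3 (κ + 1))))
        have h2 : fderiv ℝ F0 (proj n p) (proj n (e3 (κ + 1))) = 0 := by
          rw [← gd_eq hF0 hf0']
          exact hIH0 (κ + 1) le_rfl p
        have h3 : fderiv ℝ F1 (proj n p) (proj n (e3 (κ + 1))) = 0 := by
          rw [← gd_eq hF1 hf1']
          exact hIH1 (κ + 1) le_rfl p
        rw [h2, h3, add_zero] at h1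
        exact h1
      constructor
      · exact main_step hF0 hf0' (Or.inl rfl) (fun q => hdet 0 q) hm hIH0 p hd01
      · exact main_step hF1 hf1' (Or.inr rfl) (fun q => hdet 1 q) hm hIH1 p hd01

end IDFM

end
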